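/- Let $\mathcal{R}$ be a transitive typed relation. Then its Howe lifting $\mathcal{R}^H$ is right-composable with $\mathcal{R}$: if $\Gamma\vdash M\,\mathcal{R}^H\,N:\sigma$ and $\Gamma\vdash N\,\mathcal{R}\,L:\sigma$, then $\Gamma\vdash M\,\mathcal{R}^H\,L:\sigma$. Moreover, if $\mathcal{R}$ is reflexive, then $\mathcal{R}\subseteq\mathcal{R}^H$. -/

import Mathlib

open scoped ENNReal Classical

namespace PCFL

/-- Types of PCFL⊕. -/
inductive Ty : Type
  | bool | int
  | arrow (a b : Ty)
  | prod (a b : Ty)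
  | list (a : Ty)
deriving DecidableEq

/-- Binary arithmetic operators (including `+`, `≤`, `=`). -/
inductive Op : Type | plus | le | eq
deriving DecidableEq

/-- Result type of an operator. -/
def Op.resTy : Op → Ty
  | .plus => .int
  | .le => .bool
  | .eq => .bool

/-- Terms of PCFL⊕, in de Bruijn representation. -/
inductive Tm : Type
  | var (n : ℕ)
  | cnat (n : ℕ)
  | cbool (b : Bool)
  | nil
  | pair (M N : Tm)
  | cons (M N : Tm)
  | lam (M : Tm)
  | fixp (M : Tm)
  | choice (M N : Tm)
  | ite (L M N : Tm)
  | bop (o : Op) (M N : Tm)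
  | fst (M : Tm)
  | snd (M : Tm)
  | caseL (L M N : Tm)  -- in `N` : var 1 is the head, var 0 the tail
  | app (M N : Tm)
deriving DecidableEq

/-- Semantics of an operator, as a value. -/
def Op.den : Op → ℕ → ℕ → Tm
  | .plus, n, m => .cnat (n + m)
  | .le, n, m => .cbool (decide (n ≤ m))
  | .eq, n, m => .cbool (decide (n = m))

/-- Substitution of the closed term `s` for the variable `k`. -/
def subst : Tm → ℕ → Tm → Tm
  | .var n, k, s => if n = k then s else if k < n then .var (n - 1) else .var n
  | .cnat n, _, _ => .cnat n
  | .cbool b, _, _ => .cbool b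
  | .nil, _, _ => .nil
  | .pair M N, k, s => .pair (subst M k s) (subst N k s)
  | .cons M N, k, s => .cons (subst M k s) (subst N k s)
  | .lam M, k, s => .lam (subst M (k + 1) s)
  | .fixp M, k, s => .fixp (subst M (k + 1) s)
  | .choice M N, k, s => .choice (subst M k s) (subst N k s)
  | .ite L M N, k, s => .ite (subst L k s) (subst M k s) (subst N k s)
  | .bop o M N, k, s => .bop o (subst M k s) (subst N k s)
  | .fst M, k, s => .fst (subst M k s)
  | .snd M, k, s => .snd (subst M k s)
  | .caseL L M N, k, s => .caseL (subst L k s) (subst M k s) (subst N (k + 2) s)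
  | .app M N, k, s => .app (subst M k s) (subst N k s)

/-- Values of PCFL⊕. -/
inductive IsValue : Tm → Prop
  | cnat (n) : IsValue (.cnat n)
  | cbool (b) : IsValue (.cbool b)
  | nil : IsValue .nil
  | lam (M) : IsValue (.lam M)
  | fixp (M) : IsValue (.fixp M)
  | cons (M N) : IsValue (.cons M N)
  | pair (M N) : IsValue (.pair M N)

/-- The Dirac distribution on a term. -/
noncomputable def dirac (V : Tm) : Tm → ℝ≥0∞ := fun W => if W = V then 1 else 0

/-- Big-step approximation semantics `M ⇓ 𝒟` of PCFL⊕ (call-by-value). -/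
inductive Eval : Tm → (Tm → ℝ≥0∞) → Prop
  | empty (M) : Eval M 0
  | val {V} : IsValue V → Eval V (dirac V)
  | bop {M N : Tm} {D E : Tm → ℝ≥0∞} (o : Op) : Eval M D → Eval N E →
      Eval (.bop o M N)
        (fun b => ∑' (n : ℕ) (m : ℕ), D (.cnat n) * E (.cnat m) * dirac (o.den n m) b)
  | app {M N : Tm} {K F : Tm → ℝ≥0∞} {E G : Tm → Tm → Tm → ℝ≥0∞} :
      Eval M K → Eval N F →
      (∀ P v, K (.lam P) ≠ 0 → F v ≠ 0 → Eval (subst P 0 v) (E P v)) →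
      (∀ Q v, K (.fixp Q) ≠ 0 → F v ≠ 0 →
        Eval (.app (subst Q 0 (.fixp Q)) v) (G Q v)) →
      Eval (.app M N)
        (fun b => ∑' v, F v *
          ((∑' P, K (.lam P) * E P v b) + ∑' Q, K (.fixp Q) * G Q v b))
  | ite {L M₁ M₂ : Tm} {D E₁ E₂ : Tm → ℝ≥0∞} :
      Eval L D → Eval M₁ E₁ → Eval M₂ E₂ →
      Eval (.ite L M₁ M₂)
        (fun b => D (.cbool true) * E₁ b + D (.cbool false) * E₂ b)
  | caseL {L M₁ M₂ : Tm} {D E : Tm → ℝ≥0∞} {G K : Tm → Tm → Tm → ℝ≥0∞}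
      {F : Tm → Tm → Tm → ℝ≥0∞} :
      Eval L D → Eval M₁ E →
      (∀ H T, D (.cons H T) ≠ 0 → Eval H (G H T)) →
      (∀ H T, D (.cons H T) ≠ 0 → Eval T (K H T)) →
      (∀ H T V W, D (.cons H T) ≠ 0 → G H T V ≠ 0 → K H T W ≠ 0 →
        Eval (subst (subst M₂ 1 V) 0 W) (F V W)) →
      Eval (.caseL L M₁ M₂)
        (fun b => D .nil * E b +
          ∑' H, ∑' T, ∑' V, ∑' W, D (.cons H T) * G H T V * K H T W * F V W b)
  | fst {M : Tm} {D : Tm → ℝ≥0∞} {E : Tm → Tm → Tm → ℝ≥0∞} : Eval M D →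
      (∀ P N, D (.pair P N) ≠ 0 → Eval P (E P N)) →
      Eval (.fst M) (fun b => ∑' P, ∑' N, D (.pair P N) * E P N b)
  | snd {M : Tm} {D : Tm → ℝ≥0∞} {E : Tm → Tm → Tm → ℝ≥0∞} : Eval M D →
      (∀ P N, D (.pair P N) ≠ 0 → Eval N (E P N)) →
      Eval (.snd M) (fun b => ∑' P, ∑' N, D (.pair P N) * E P N b)
  | choice {M₁ M₂ : Tm} {D₁ D₂ : Tm → ℝ≥0∞} : Eval M₁ D₁ → Eval M₂ D₂ →
      Eval (.choice M₁ M₂) (fun b => D₁ b / 2 + D₂ b / 2)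

/-- The big-step semantics `⟦M⟧`: the (pointwise) supremum of all approximations. -/
noncomputable def sem (M : Tm) : Tm → ℝ≥0∞ :=
  fun V => ⨆ (D : Tm → ℝ≥0∞) (_ : Eval M D), D V

/-- Typing judgements of PCFL⊕ (Figure 1), de Bruijn style. -/
inductive HasTy : List Ty → Tm → Ty → Prop
  | var {Γ n σ} : Γ[n]? = some σ → HasTy Γ (.var n) σ
  | cnat {Γ n} : HasTy Γ (.cnat n) .int
  | cbool {Γ b} : HasTy Γ (.cbool b) .bool
  | nil {Γ σ} : HasTy Γ .nil (.list σ)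
  | pair {Γ M N σ τ} : HasTy Γ M σ → HasTy Γ N τ → HasTy Γ (.pair M N) (.prod σ τ)
  | cons {Γ M N σ} : HasTy Γ M σ → HasTy Γ N (.list σ) → HasTy Γ (.cons M N) (.list σ)
  | lam {Γ M σ τ} : HasTy (σ :: Γ) M τ → HasTy Γ (.lam M) (.arrow σ τ)
  | fixp {Γ M σ τ} : HasTy (.arrow σ τ :: Γ) M (.arrow σ τ) →
      HasTy Γ (.fixp M) (.arrow σ τ)
  | choice {Γ M N σ} : HasTy Γ M σ → HasTy Γ N σ → HasTy Γ (.choice M N) σ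
  | ite {Γ L M N σ} : HasTy Γ L .bool → HasTy Γ M σ → HasTy Γ N σ →
      HasTy Γ (.ite L M N) σ
  | bop {Γ M N} (o : Op) : HasTy Γ M .int → HasTy Γ N .int →
      HasTy Γ (.bop o M N) o.resTy
  | fst {Γ M σ τ} : HasTy Γ M (.prod σ τ) → HasTy Γ (.fst M) σ
  | snd {Γ M σ τ} : HasTy Γ M (.prod σ τ) → HasTy Γ (.snd M) τ
  | caseL {Γ L M N σ τ} : HasTy Γ L (.list σ) → HasTy Γ M τ →
      HasTy (.list σ :: σ :: Γ) N τ → HasTy Γ (.caseL L M N) τ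
  | app {Γ M N σ τ} : HasTy Γ M (.arrow σ τ) → HasTy Γ N σ → HasTy Γ (.app M N) τ

end PCFL

namespace PCFL

/-- A typed relation: a family of binary relations on terms of type `σ` in context `Γ`. -/
def TRel : Type := List Ty → Tm → Tm → Ty → Prop

/-- Reflexivity of a typed relation: it relates every well-typed term to itself. -/
def TRefl (R : TRel) : Prop := ∀ Γ M σ, HasTy Γ M σ → R Γ M M σ

/-- Transitivity of a typed relation. -/
def TTrans (R : TRel) : Prop :=
  ∀ Γ M N L σ, R Γ M N σ → R Γ N L σ → R Γ M L σ

/-- Compatibility of a typed relation: closure under all the term constructors. -/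
def Compatible (R : TRel) : Prop :=
  (∀ Γ n σ, Γ[n]? = some σ → R Γ (.var n) (.var n) σ) ∧
  (∀ (Γ : List Ty) (n : ℕ), R Γ (.cnat n) (.cnat n) .int) ∧
  (∀ (Γ : List Ty) (b : Bool), R Γ (.cbool b) (.cbool b) .bool) ∧
  (∀ (Γ : List Ty) (σ : Ty), R Γ .nil .nil (.list σ)) ∧
  (∀ Γ σ τ M M', R (σ :: Γ) M M' τ → R Γ (.lam M) (.lam M') (.arrow σ τ)) ∧
  (∀ Γ σ τ M M', R (.arrow σ τ :: Γ) M M' (.arrow σ τ) →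
    R Γ (.fixp M) (.fixp M') (.arrow σ τ)) ∧
  (∀ Γ σ τ M M' N N', R Γ M M' (.arrow σ τ) → R Γ N N' σ →
    R Γ (.app M N) (.app M' N') τ) ∧
  (∀ Γ σ τ M M' N N', R Γ M M' σ → R Γ N N' τ →
    R Γ (.pair M N) (.pair M' N') (.prod σ τ)) ∧
  (∀ Γ σ τ M M', R Γ M M' (.prod σ τ) → R Γ (.fst M) (.fst M') σ) ∧
  (∀ Γ σ τ M M', R Γ M M' (.prod σ τ) → R Γ (.snd M) (.snd M') τ) ∧
  (∀ Γ σ M M' N N', R Γ M M' σ → R Γ N N' σ →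
    R Γ (.choice M N) (.choice M' N') σ) ∧
  (∀ Γ σ L L' M M' N N', R Γ L L' .bool → R Γ M M' σ → R Γ N N' σ →
    R Γ (.ite L M N) (.ite L' M' N') σ) ∧
  (∀ Γ (o : Op) M M' N N', R Γ M M' .int → R Γ N N' .int →
    R Γ (.bop o M N) (.bop o M' N') o.resTy) ∧
  (∀ Γ σ M M' N N', R Γ M M' σ → R Γ N N' (.list σ) →
    R Γ (.cons M N) (.cons M' N') (.list σ)) ∧
  (∀ Γ σ τ L L' M M' N N', R Γ L L' (.list σ) → R Γ M M' τ →
    R (.list σ :: σ :: Γ) N N' τ → R Γ (.caseL L M N) (.caseL L' M' N') τ)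

/-- Howe's lifting `R^H` of a typed relation `R` (Figure 3). -/
inductive Howe (R : TRel) : List Ty → Tm → Tm → Ty → Prop
  | var {Γ n M σ} : R Γ (.var n) M σ → Howe R Γ (.var n) M σ
  | cnat {Γ n M} : R Γ (.cnat n) M .int → Howe R Γ (.cnat n) M .int
  | cbool {Γ b M} : R Γ (.cbool b) M .bool → Howe R Γ (.cbool b) M .bool
  | nil {Γ σ M} : R Γ .nil M (.list σ) → Howe R Γ .nil M (.list σ)
  | lam {Γ σ τ M N L} : Howe R (σ :: Γ) M N τ → R Γ (.lam N) L (.arrow σ τ) →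
      Howe R Γ (.lam M) L (.arrow σ τ)
  | fixp {Γ σ τ M N L} : Howe R (.arrow σ τ :: Γ) M N (.arrow σ τ) →
      R Γ (.fixp N) L (.arrow σ τ) → Howe R Γ (.fixp M) L (.arrow σ τ)
  | app {Γ σ τ M M' N N' L} : Howe R Γ M M' (.arrow σ τ) → Howe R Γ N N' σ →
      R Γ (.app M' N') L τ → Howe R Γ (.app M N) L τ
  | pair {Γ σ τ M M' N N' L} : Howe R Γ M M' σ → Howe R Γ N N' τ →
      R Γ (.pair M' N') L (.prod σ τ) → Howe R Γ (.pair M N) L (.prod σ τ)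
  | fst {Γ σ τ M M' L} : Howe R Γ M M' (.prod σ τ) → R Γ (.fst M') L σ →
      Howe R Γ (.fst M) L σ
  | snd {Γ σ τ M M' L} : Howe R Γ M M' (.prod σ τ) → R Γ (.snd M') L τ →
      Howe R Γ (.snd M) L τ
  | choice {Γ σ M M' N N' L} : Howe R Γ M M' σ → Howe R Γ N N' σ →
      R Γ (.choice M' N') L σ → Howe R Γ (.choice M N) L σ
  | ite {Γ σ L L' M M' N N' U} : Howe R Γ L L' .bool → Howe R Γ M M' σ →
      Howe R Γ N N' σ → R Γ (.ite L' M' N') U σ → Howe R Γ (.ite L M N) U σ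
  | bop {Γ M M' N N' L} (o : Op) : Howe R Γ M M' .int → Howe R Γ N N' .int →
      R Γ (.bop o M' N') L o.resTy → Howe R Γ (.bop o M N) L o.resTy
  | cons {Γ σ M M' N N' L} : Howe R Γ M M' σ → Howe R Γ N N' (.list σ) →
      R Γ (.cons M' N') L (.list σ) → Howe R Γ (.cons M N) L (.list σ)
  | caseL {Γ σ τ L L' M M' N N' U} : Howe R Γ L L' (.list σ) → Howe R Γ M M' τ →
      Howe R (.list σ :: σ :: Γ) N N' τ → R Γ (.caseL L' M' N') U τ →
      Howe R Γ (.caseL L M N) U τ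

end PCFL

namespace PCFL

variable {R : TRel} {Γ : List Ty} {M N L : Tm} {σ : Ty}

/-- Every rule of `R^H` ends in an `R` premise, which transitivity lets us extend by `hR`. -/
theorem Howe.trans_rel (htrans : TTrans R) (h : Howe R Γ M N σ) (hR : R Γ N L σ) :
    Howe R Γ M L σ := by
  cases h <;> constructor <;> first | assumption | exact htrans _ _ _ _ _ ‹_› hR

theorem HasTy.howe_of_rel (hrefl : TRefl R) (hty : HasTy Γ M σ) (hR : R Γ M N σ) :
    Howe R Γ M N σ := by
  induction hty generalizing N with
  | var => exact .var hR
  | cnat => exact .cnat hR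
  | cbool => exact .cbool hR
  | nil => exact .nil hR
  | lam h ih => exact .lam (ih (hrefl _ _ _ h)) hR
  | fixp h ih => exact .fixp (ih (hrefl _ _ _ h)) hR
  | app h₁ h₂ ih₁ ih₂ => exact .app (ih₁ (hrefl _ _ _ h₁)) (ih₂ (hrefl _ _ _ h₂)) hR
  | pair h₁ h₂ ih₁ ih₂ => exact .pair (ih₁ (hrefl _ _ _ h₁)) (ih₂ (hrefl _ _ _ h₂)) hR
  | fst h ih => exact .fst (ih (hrefl _ _ _ h)) hR
  | snd h ih => exact .snd (ih (hrefl _ _ _ h)) hR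
  | choice h₁ h₂ ih₁ ih₂ => exact .choice (ih₁ (hrefl _ _ _ h₁)) (ih₂ (hrefl _ _ _ h₂)) hR
  | ite h₁ h₂ h₃ ih₁ ih₂ ih₃ =>
    exact .ite (ih₁ (hrefl _ _ _ h₁)) (ih₂ (hrefl _ _ _ h₂)) (ih₃ (hrefl _ _ _ h₃)) hR
  | bop o h₁ h₂ ih₁ ih₂ => exact .bop o (ih₁ (hrefl _ _ _ h₁)) (ih₂ (hrefl _ _ _ h₂)) hR
  | cons h₁ h₂ ih₁ ih₂ => exact .cons (ih₁ (hrefl _ _ _ h₁)) (ih₂ (hrefl _ _ _ h₂)) hR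
  | caseL h₁ h₂ h₃ ih₁ ih₂ ih₃ =>
    exact .caseL (ih₁ (hrefl _ _ _ h₁)) (ih₂ (hrefl _ _ _ h₂)) (ih₃ (hrefl _ _ _ h₃)) hR

/-- if `R` is transitive then its Howe lifting is right-composable with
`R`; moreover, if `R` is reflexive then `R ⊆ R^H` (on well-typed terms). -/
theorem stmt14 (R : TRel) :
    (TTrans R →
      ∀ Γ M N L σ, Howe R Γ M N σ → R Γ N L σ → Howe R Γ M L σ) ∧
    (TRefl R →
      ∀ Γ M N σ, HasTy Γ M σ → R Γ M N σ → Howe R Γ M N σ) := by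
  exact ⟨fun htrans _ _ _ _ _ h hR => h.trans_rel htrans hR,
    fun hrefl _ _ _ _ hty hR => hty.howe_of_rel hrefl hR⟩

end PCFL
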